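/- (Second family, tangent algebras.) For every point τ : Fin n → ℂ, the quotient ℂ-algebra S/(J + the ideal generated by {tᵢ − τᵢ : 1 ≤ i ≤ n}) is isomorphic, as a ℂ-algebra, to MvPolynomial (Fin 2) ℂ modulo the ideal generated by x₂², x₂·x₃, and x₃^{n−1} (where x₂, x₃ denote the two variables), i.e. to ℂ[x₂,x₃]/(x₂², x₂x₃, x₃^{n−1}). -/

import Mathlib

open MvPolynomial

/-- The canonical Poisson bracket on functions on the cotangent bundle of `ℂⁿ`:
`{f,g} = Σᵢ (∂f/∂yᵢ · ∂g/∂tᵢ − ∂f/∂tᵢ · ∂g/∂yᵢ)`, where `tᵢ` is the variable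
indexed by `Sum.inl i` and `yᵢ` the one indexed by `Sum.inr i`. -/
noncomputable def pb (n : ℕ) (f g : MvPolynomial (Fin n ⊕ Fin n) ℂ) :
    MvPolynomial (Fin n ⊕ Fin n) ℂ :=
  ∑ i : Fin n,
    (pderiv (Sum.inr i) f * pderiv (Sum.inl i) g -
     pderiv (Sum.inl i) f * pderiv (Sum.inr i) g)

/-- The embedding `φ : R → S` renaming each variable `i` to `Sum.inl i`. -/
noncomputable def phi (n : ℕ) :
    MvPolynomial (Fin n) ℂ →ₐ[ℂ] MvPolynomial (Fin n ⊕ Fin n) ℂ :=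
  rename Sum.inl

/-- The fiberwise-linear function `ι(X) = Σᵢ φ(Xᵢ)·yᵢ` associated to a vector
field `X : Fin n → R`. -/
noncomputable def iota (n : ℕ) (Xf : Fin n → MvPolynomial (Fin n) ℂ) :
    MvPolynomial (Fin n ⊕ Fin n) ℂ :=
  ∑ i : Fin n, phi n (Xf i) * MvPolynomial.X (Sum.inr i)

/-- The Lie bracket of vector fields: `[X,Y]ᵢ = Σⱼ (Xⱼ·∂Yᵢ/∂tⱼ − Yⱼ·∂Xᵢ/∂tⱼ)`. -/
noncomputable def lieVF (n : ℕ) (Xf Yf : Fin n → MvPolynomial (Fin n) ℂ) :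
    Fin n → MvPolynomial (Fin n) ℂ :=
  fun i => ∑ j : Fin n, (Xf j * pderiv j (Yf i) - Yf j * pderiv j (Xf i))

/-- `ρ₂ := t₃·y₁ + Σ_{k=3}^{n−1} (k−1)·t_{k+1}·y_k` of the second family (2.5.3),
written in `0`-based indexing: `ρ₂ = t₂·y₀ + Σ_{k=2}^{n−2} k·t_{k+1}·y_k`. -/
noncomputable def rho2 (n : ℕ) (hn : 3 ≤ n) : MvPolynomial (Fin n ⊕ Fin n) ℂ :=
  MvPolynomial.X (Sum.inl (⟨2, by omega⟩ : Fin n)) *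
    MvPolynomial.X (Sum.inr (⟨0, by omega⟩ : Fin n)) +
  ∑ k ∈ (Finset.Ico 2 (n - 1)).attach,
    MvPolynomial.C ((k.1 : ℂ)) *
      MvPolynomial.X (Sum.inl (⟨k.1 + 1, by
        have := Finset.mem_Ico.mp k.2; omega⟩ : Fin n)) *
      MvPolynomial.X (Sum.inr (⟨k.1, by
        have := Finset.mem_Ico.mp k.2; omega⟩ : Fin n))

/-- The ideal of the second family (2.5.3): generated by `y₁ − 1`, `(y₂ − ρ₂)²`,
`(y₂ − ρ₂)·y₃`, `y₃^{n−1}`, and `y_k − y₃^{k−2}` for `k = 4,…,n`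
(all written in `0`-based indexing). -/
noncomputable def Jfam2 (n : ℕ) (hn : 3 ≤ n) :
    Ideal (MvPolynomial (Fin n ⊕ Fin n) ℂ) :=
  Ideal.span ({MvPolynomial.X (Sum.inr (⟨0, by omega⟩ : Fin n)) - 1,
    (MvPolynomial.X (Sum.inr (⟨1, by omega⟩ : Fin n)) - rho2 n hn) ^ 2,
    (MvPolynomial.X (Sum.inr (⟨1, by omega⟩ : Fin n)) - rho2 n hn) *
      MvPolynomial.X (Sum.inr (⟨2, by omega⟩ : Fin n)),
    MvPolynomial.X (Sum.inr (⟨2, by omega⟩ : Fin n)) ^ (n - 1)} ∪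
    Set.range (fun k : (Finset.Ico 3 n : Finset ℕ) =>
      MvPolynomial.X (Sum.inr (⟨k.1, (Finset.mem_Ico.mp k.2).2⟩ : Fin n)) -
      MvPolynomial.X (Sum.inr (⟨2, by omega⟩ : Fin n)) ^ (k.1 - 1)))

namespace Stmt17Aux

noncomputable def Tid (n : ℕ) : Ideal (MvPolynomial (Fin 2) ℂ) :=
  Ideal.span {MvPolynomial.X 0 ^ 2, MvPolynomial.X 0 * MvPolynomial.X 1,
    MvPolynomial.X 1 ^ (n - 1)}

noncomputable def IA (n : ℕ) (hn : 3 ≤ n) (τ : Fin n → ℂ) :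
    Ideal (MvPolynomial (Fin n ⊕ Fin n) ℂ) :=
  Jfam2 n hn + Ideal.span (Set.range (fun i : Fin n =>
    MvPolynomial.X (Sum.inl i) - MvPolynomial.C (τ i)))

noncomputable def rbar {R : Type*} [CommRing R] [Algebra ℂ R]
    (n : ℕ) (hn : 3 ≤ n) (τ : Fin n → ℂ) (z : R) : R :=
  algebraMap ℂ R (τ ⟨2, by omega⟩) +
  ∑ k ∈ (Finset.Ico 2 (n - 1)).attach,
    algebraMap ℂ R ((k.1 : ℂ) * τ ⟨k.1 + 1, by
        have := Finset.mem_Ico.mp k.2; omega⟩) * z ^ (k.1 - 1)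

lemma map_rbar {R R' : Type*} [CommRing R] [Algebra ℂ R] [CommRing R'] [Algebra ℂ R']
    (g : R →ₐ[ℂ] R') (n : ℕ) (hn : 3 ≤ n) (τ : Fin n → ℂ) (z : R) :
    g (rbar n hn τ z) = rbar n hn τ (g z) := by
  simp [rbar, map_sum]

noncomputable def fmap (n : ℕ) (hn : 3 ≤ n) (τ : Fin n → ℂ) :
    Fin n ⊕ Fin n → MvPolynomial (Fin 2) ℂ ⧸ Tid n :=
  Sum.elim (fun i => algebraMap ℂ _ (τ i))
    (fun i => if i.1 = 0 then 1
      else if i.1 = 1 then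
        Ideal.Quotient.mk (Tid n) (MvPolynomial.X 0) +
          rbar n hn τ (Ideal.Quotient.mk (Tid n) (MvPolynomial.X 1))
      else Ideal.Quotient.mk (Tid n) (MvPolynomial.X 1) ^ (i.1 - 1))

noncomputable def Phi (n : ℕ) (hn : 3 ≤ n) (τ : Fin n → ℂ) :
    MvPolynomial (Fin n ⊕ Fin n) ℂ →ₐ[ℂ] (MvPolynomial (Fin 2) ℂ ⧸ Tid n) :=
  aeval (fmap n hn τ)

lemma Phi_rho2 (n : ℕ) (hn : 3 ≤ n) (τ : Fin n → ℂ) :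
    Phi n hn τ (rho2 n hn) =
      rbar n hn τ (Ideal.Quotient.mk (Tid n) (MvPolynomial.X 1)) := by
  unfold Phi rho2 rbar
  rw [map_add, map_mul, map_sum, aeval_X, aeval_X]
  have h1 : fmap n hn τ (Sum.inr (⟨0, by omega⟩ : Fin n)) = 1 := by simp [fmap]
  have h2 : fmap n hn τ (Sum.inl (⟨2, by omega⟩ : Fin n)) = algebraMap ℂ _ (τ ⟨2, by omega⟩) := by
    simp [fmap]
  rw [h1, h2, mul_one]
  congr 1
  refine Finset.sum_congr rfl fun k _ => ?_
  have hk := Finset.mem_Ico.mp k.2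
  rw [map_mul, map_mul, aeval_C, aeval_X, aeval_X]
  simp only [fmap, Sum.elim_inl, Sum.elim_inr]
  rw [if_neg (by omega), if_neg (by omega), map_mul]

lemma algebraMap_mk {σ : Type*} (I : Ideal (MvPolynomial σ ℂ)) (c : ℂ) :
    algebraMap ℂ (MvPolynomial σ ℂ ⧸ I) c = Ideal.Quotient.mk I (MvPolynomial.C c) := rfl

lemma IA_le_ker (n : ℕ) (hn : 3 ≤ n) (τ : Fin n → ℂ) :
    IA n hn τ ≤ RingHom.ker (Phi n hn τ) := by
  have hy1 : Phi n hn τ (MvPolynomial.X (Sum.inr (⟨1, by omega⟩ : Fin n)) - rho2 n hn)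
      = Ideal.Quotient.mk (Tid n) (MvPolynomial.X 0) := by
    rw [map_sub, Phi_rho2]
    show (aeval (fmap n hn τ)) _ - _ = _
    rw [aeval_X]
    simp [fmap]
  have hy2 : Phi n hn τ (MvPolynomial.X (Sum.inr (⟨2, by omega⟩ : Fin n)))
      = Ideal.Quotient.mk (Tid n) (MvPolynomial.X 1) := by
    show (aeval (fmap n hn τ)) _ = _
    rw [aeval_X]; simp [fmap]
  rw [IA, Submodule.add_eq_sup, sup_le_iff]
  constructor
  · rw [Jfam2, Ideal.span_le]
    rintro x hx
    simp only [Set.mem_union, Set.mem_insert_iff, Set.mem_singleton_iff, Set.mem_range] at hx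
    rw [SetLike.mem_coe, RingHom.mem_ker]
    rcases hx with (rfl | rfl | rfl | rfl) | ⟨k, rfl⟩
    · rw [map_sub, map_one]
      show (aeval (fmap n hn τ)) _ - 1 = 0
      rw [aeval_X]; simp [fmap]
    · rw [map_pow, hy1, ← map_pow]
      exact Ideal.Quotient.eq_zero_iff_mem.mpr (Ideal.subset_span (by simp))
    · rw [map_mul, hy1, hy2, ← map_mul]
      exact Ideal.Quotient.eq_zero_iff_mem.mpr (Ideal.subset_span (by simp))
    · rw [map_pow, hy2, ← map_pow]
      exact Ideal.Quotient.eq_zero_iff_mem.mpr (Ideal.subset_span (by simp))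
    · have hk := Finset.mem_Ico.mp k.2
      rw [map_sub, map_pow, hy2]
      show (aeval (fmap n hn τ)) _ - _ = 0
      rw [aeval_X]
      simp only [fmap, Sum.elim_inr]
      rw [if_neg (by omega), if_neg (by omega), sub_self]
  · rw [Ideal.span_le]
    rintro x ⟨i, rfl⟩
    rw [SetLike.mem_coe, RingHom.mem_ker, map_sub]
    show (aeval (fmap n hn τ)) _ - (aeval (fmap n hn τ)) _ = 0
    rw [aeval_X, aeval_C]
    simp [fmap]

noncomputable def PhiBar (n : ℕ) (hn : 3 ≤ n) (τ : Fin n → ℂ) :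
    (MvPolynomial (Fin n ⊕ Fin n) ℂ ⧸ IA n hn τ) →ₐ[ℂ] (MvPolynomial (Fin 2) ℂ ⧸ Tid n) :=
  Ideal.Quotient.liftₐ (IA n hn τ) (Phi n hn τ)
    (fun a ha => IA_le_ker n hn τ ha)

noncomputable def gmap (n : ℕ) (hn : 3 ≤ n) (τ : Fin n → ℂ) :
    Fin 2 → (MvPolynomial (Fin n ⊕ Fin n) ℂ ⧸ IA n hn τ) :=
  ![Ideal.Quotient.mk _ (MvPolynomial.X (Sum.inr (⟨1, by omega⟩ : Fin n)) - rho2 n hn),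
    Ideal.Quotient.mk _ (MvPolynomial.X (Sum.inr (⟨2, by omega⟩ : Fin n)))]

noncomputable def Psi (n : ℕ) (hn : 3 ≤ n) (τ : Fin n → ℂ) :
    MvPolynomial (Fin 2) ℂ →ₐ[ℂ] (MvPolynomial (Fin n ⊕ Fin n) ℂ ⧸ IA n hn τ) :=
  aeval (gmap n hn τ)

lemma J_le_IA (n : ℕ) (hn : 3 ≤ n) (τ : Fin n → ℂ) : Jfam2 n hn ≤ IA n hn τ := by
  rw [IA, Submodule.add_eq_sup]; exact le_sup_left

lemma mem_IA_of_gen (n : ℕ) (hn : 3 ≤ n) (τ : Fin n → ℂ)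
    {x : MvPolynomial (Fin n ⊕ Fin n) ℂ}
    (hx : x ∈ ({MvPolynomial.X (Sum.inr (⟨0, by omega⟩ : Fin n)) - 1,
    (MvPolynomial.X (Sum.inr (⟨1, by omega⟩ : Fin n)) - rho2 n hn) ^ 2,
    (MvPolynomial.X (Sum.inr (⟨1, by omega⟩ : Fin n)) - rho2 n hn) *
      MvPolynomial.X (Sum.inr (⟨2, by omega⟩ : Fin n)),
    MvPolynomial.X (Sum.inr (⟨2, by omega⟩ : Fin n)) ^ (n - 1)} ∪
    Set.range (fun k : (Finset.Ico 3 n : Finset ℕ) =>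
      MvPolynomial.X (Sum.inr (⟨k.1, (Finset.mem_Ico.mp k.2).2⟩ : Fin n)) -
      MvPolynomial.X (Sum.inr (⟨2, by omega⟩ : Fin n)) ^ (k.1 - 1)) :
      Set (MvPolynomial (Fin n ⊕ Fin n) ℂ))) :
    x ∈ IA n hn τ :=
  J_le_IA n hn τ (Ideal.subset_span hx)

lemma Tid_le_ker (n : ℕ) (hn : 3 ≤ n) (τ : Fin n → ℂ) :
    Tid n ≤ RingHom.ker (Psi n hn τ) := by
  have hx0 : Psi n hn τ (MvPolynomial.X 0) =
      Ideal.Quotient.mk _ (MvPolynomial.X (Sum.inr (⟨1, by omega⟩ : Fin n)) - rho2 n hn) := by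
    show (aeval (gmap n hn τ)) _ = _
    rw [aeval_X]; simp [gmap]
  have hx1 : Psi n hn τ (MvPolynomial.X 1) =
      Ideal.Quotient.mk _ (MvPolynomial.X (Sum.inr (⟨2, by omega⟩ : Fin n))) := by
    show (aeval (gmap n hn τ)) _ = _
    rw [aeval_X]; simp [gmap]
  rw [Tid, Ideal.span_le]
  rintro x hx
  simp only [Set.mem_insert_iff, Set.mem_singleton_iff] at hx
  rw [SetLike.mem_coe, RingHom.mem_ker]
  rcases hx with rfl | rfl | rfl
  · rw [map_pow, hx0, ← map_pow]
    exact Ideal.Quotient.eq_zero_iff_mem.mpr (mem_IA_of_gen n hn τ (by simp))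
  · rw [map_mul, hx0, hx1, ← map_mul]
    exact Ideal.Quotient.eq_zero_iff_mem.mpr (mem_IA_of_gen n hn τ (by simp))
  · rw [map_pow, hx1, ← map_pow]
    exact Ideal.Quotient.eq_zero_iff_mem.mpr (mem_IA_of_gen n hn τ (by simp))

noncomputable def PsiBar (n : ℕ) (hn : 3 ≤ n) (τ : Fin n → ℂ) :
    (MvPolynomial (Fin 2) ℂ ⧸ Tid n) →ₐ[ℂ] (MvPolynomial (Fin n ⊕ Fin n) ℂ ⧸ IA n hn τ) :=
  Ideal.Quotient.liftₐ (Tid n) (Psi n hn τ)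
    (fun a ha => Tid_le_ker n hn τ ha)

lemma mkA_y0 (n : ℕ) (hn : 3 ≤ n) (τ : Fin n → ℂ) :
    Ideal.Quotient.mk (IA n hn τ) (MvPolynomial.X (Sum.inr (⟨0, by omega⟩ : Fin n))) = 1 := by
  rw [show (1 : MvPolynomial (Fin n ⊕ Fin n) ℂ ⧸ IA n hn τ) = Ideal.Quotient.mk _ 1 from rfl,
    Ideal.Quotient.mk_eq_mk_iff_sub_mem]
  exact mem_IA_of_gen n hn τ (by simp)

lemma mkA_t (n : ℕ) (hn : 3 ≤ n) (τ : Fin n → ℂ) (i : Fin n) :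
    Ideal.Quotient.mk (IA n hn τ) (MvPolynomial.X (Sum.inl i)) =
      Ideal.Quotient.mk (IA n hn τ) (MvPolynomial.C (τ i)) := by
  rw [Ideal.Quotient.mk_eq_mk_iff_sub_mem, IA, Submodule.add_eq_sup]
  exact Submodule.mem_sup_right (Ideal.subset_span ⟨i, rfl⟩)

lemma mkA_yk (n : ℕ) (hn : 3 ≤ n) (τ : Fin n → ℂ) (k : ℕ) (hk : 3 ≤ k) (hkn : k < n) :
    Ideal.Quotient.mk (IA n hn τ) (MvPolynomial.X (Sum.inr (⟨k, hkn⟩ : Fin n))) =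
      Ideal.Quotient.mk (IA n hn τ) (MvPolynomial.X (Sum.inr (⟨2, by omega⟩ : Fin n))) ^ (k - 1) := by
  rw [← map_pow, Ideal.Quotient.mk_eq_mk_iff_sub_mem]
  refine mem_IA_of_gen n hn τ (Or.inr ⟨⟨k, Finset.mem_Ico.mpr ⟨hk, hkn⟩⟩, rfl⟩)

lemma mkA_y2pow (n : ℕ) (hn : 3 ≤ n) (τ : Fin n → ℂ) (k : ℕ) (hk : 2 ≤ k) (hkn : k < n) :
    Ideal.Quotient.mk (IA n hn τ) (MvPolynomial.X (Sum.inr (⟨k, hkn⟩ : Fin n))) =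
      Ideal.Quotient.mk (IA n hn τ) (MvPolynomial.X (Sum.inr (⟨2, by omega⟩ : Fin n))) ^ (k - 1) := by
  rcases eq_or_lt_of_le hk with h | h
  · cases h; rw [pow_one]
  · exact mkA_yk n hn τ k h hkn

lemma mkA_rho2 (n : ℕ) (hn : 3 ≤ n) (τ : Fin n → ℂ) :
    Ideal.Quotient.mk (IA n hn τ) (rho2 n hn) =
      rbar n hn τ (Ideal.Quotient.mk (IA n hn τ)
        (MvPolynomial.X (Sum.inr (⟨2, by omega⟩ : Fin n)))) := by
  unfold rho2 rbar
  rw [map_add, map_mul, map_sum, mkA_y0, mul_one, mkA_t, ← algebraMap_mk]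
  refine congrArg₂ (· + ·) rfl ?_
  refine Finset.sum_congr rfl fun k _ => ?_
  have hk := Finset.mem_Ico.mp k.2
  rw [map_mul, map_mul, mkA_t, mkA_y2pow n hn τ k.1 hk.1 (by omega), map_mul,
    ← algebraMap_mk, ← algebraMap_mk, ← map_mul]

lemma PhiBar_mk (n : ℕ) (hn : 3 ≤ n) (τ : Fin n → ℂ) (x : MvPolynomial (Fin n ⊕ Fin n) ℂ) :
    PhiBar n hn τ (Ideal.Quotient.mk _ x) = Phi n hn τ x := rfl

lemma PsiBar_mk (n : ℕ) (hn : 3 ≤ n) (τ : Fin n → ℂ) (x : MvPolynomial (Fin 2) ℂ) :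
    PsiBar n hn τ (Ideal.Quotient.mk _ x) = Psi n hn τ x := rfl

lemma Phi_y1sub (n : ℕ) (hn : 3 ≤ n) (τ : Fin n → ℂ) :
    Phi n hn τ (MvPolynomial.X (Sum.inr (⟨1, by omega⟩ : Fin n)) - rho2 n hn)
      = Ideal.Quotient.mk (Tid n) (MvPolynomial.X 0) := by
  rw [map_sub, Phi_rho2]
  show (aeval (fmap n hn τ)) _ - _ = _
  rw [aeval_X]
  simp [fmap]

lemma Phi_y2 (n : ℕ) (hn : 3 ≤ n) (τ : Fin n → ℂ) :
    Phi n hn τ (MvPolynomial.X (Sum.inr (⟨2, by omega⟩ : Fin n)))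
      = Ideal.Quotient.mk (Tid n) (MvPolynomial.X 1) := by
  show (aeval (fmap n hn τ)) _ = _
  rw [aeval_X]; simp [fmap]

lemma Psi_X0 (n : ℕ) (hn : 3 ≤ n) (τ : Fin n → ℂ) :
    Psi n hn τ (MvPolynomial.X 0) =
      Ideal.Quotient.mk _ (MvPolynomial.X (Sum.inr (⟨1, by omega⟩ : Fin n)) - rho2 n hn) := by
  show (aeval (gmap n hn τ)) _ = _
  rw [aeval_X]; simp [gmap]

lemma Psi_X1 (n : ℕ) (hn : 3 ≤ n) (τ : Fin n → ℂ) :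
    Psi n hn τ (MvPolynomial.X 1) =
      Ideal.Quotient.mk _ (MvPolynomial.X (Sum.inr (⟨2, by omega⟩ : Fin n))) := by
  show (aeval (gmap n hn τ)) _ = _
  rw [aeval_X]; simp [gmap]

lemma comp1 (n : ℕ) (hn : 3 ≤ n) (τ : Fin n → ℂ) :
    (PhiBar n hn τ).comp (PsiBar n hn τ) = AlgHom.id ℂ _ := by
  apply Ideal.Quotient.algHom_ext
  apply MvPolynomial.algHom_ext
  intro i
  fin_cases i
  · simp only [AlgHom.comp_apply, Ideal.Quotient.mkₐ_eq_mk, AlgHom.id_apply]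
    rw [PsiBar_mk]
    show (PhiBar n hn τ) (Psi n hn τ (MvPolynomial.X 0)) = _
    rw [Psi_X0, PhiBar_mk, Phi_y1sub]; rfl
  · simp only [AlgHom.comp_apply, Ideal.Quotient.mkₐ_eq_mk, AlgHom.id_apply]
    rw [PsiBar_mk]
    show (PhiBar n hn τ) (Psi n hn τ (MvPolynomial.X 1)) = _
    rw [Psi_X1, PhiBar_mk, Phi_y2]; rfl

lemma comp2 (n : ℕ) (hn : 3 ≤ n) (τ : Fin n → ℂ) :
    (PsiBar n hn τ).comp (PhiBar n hn τ) = AlgHom.id ℂ _ := by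
  apply Ideal.Quotient.algHom_ext
  apply MvPolynomial.algHom_ext
  rintro (i | ⟨iv, hi⟩)
  · simp only [AlgHom.comp_apply, Ideal.Quotient.mkₐ_eq_mk, AlgHom.id_apply]
    rw [PhiBar_mk]
    have : Phi n hn τ (MvPolynomial.X (Sum.inl i)) = algebraMap ℂ _ (τ i) := by
      show (aeval (fmap n hn τ)) _ = _
      rw [aeval_X]; simp [fmap]
    rw [this, AlgHom.commutes, algebraMap_mk, mkA_t]
  · simp only [AlgHom.comp_apply, Ideal.Quotient.mkₐ_eq_mk, AlgHom.id_apply]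
    rw [PhiBar_mk]
    by_cases h0 : iv = 0
    · subst h0
      have : Phi n hn τ (MvPolynomial.X (Sum.inr (⟨0, hi⟩ : Fin n))) = 1 := by
        show (aeval (fmap n hn τ)) _ = _
        rw [aeval_X]; simp [fmap]
      rw [this, map_one, mkA_y0 n hn τ]
    by_cases h1 : iv = 1
    · subst h1
      have : Phi n hn τ (MvPolynomial.X (Sum.inr (⟨1, hi⟩ : Fin n))) =
          Ideal.Quotient.mk (Tid n) (MvPolynomial.X 0) +
            rbar n hn τ (Ideal.Quotient.mk (Tid n) (MvPolynomial.X 1)) := by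
        show (aeval (fmap n hn τ)) _ = _
        rw [aeval_X]; simp [fmap]
      rw [this, map_add, PsiBar_mk, map_rbar, PsiBar_mk, Psi_X0, Psi_X1,
        ← mkA_rho2, ← map_add, sub_add_cancel]
    · have h2 : 2 ≤ iv := by omega
      have : Phi n hn τ (MvPolynomial.X (Sum.inr (⟨iv, hi⟩ : Fin n))) =
          Ideal.Quotient.mk (Tid n) (MvPolynomial.X 1) ^ (iv - 1) := by
        show (aeval (fmap n hn τ)) _ = _
        rw [aeval_X]
        simp only [fmap, Sum.elim_inr]
        rw [if_neg h0, if_neg h1]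
      rw [this, map_pow, PsiBar_mk, Psi_X1, ← mkA_y2pow n hn τ iv h2 hi]

theorem main (n : ℕ) (hn : 3 ≤ n) (τ : Fin n → ℂ) :
    Nonempty
      ((MvPolynomial (Fin n ⊕ Fin n) ℂ ⧸
          (Jfam2 n hn + Ideal.span (Set.range (fun i : Fin n =>
            MvPolynomial.X (Sum.inl i) - MvPolynomial.C (τ i))))) ≃ₐ[ℂ]
        (MvPolynomial (Fin 2) ℂ ⧸
          (Ideal.span {MvPolynomial.X 0 ^ 2,
            MvPolynomial.X 0 * MvPolynomial.X 1,
            MvPolynomial.X 1 ^ (n - 1)} : Ideal (MvPolynomial (Fin 2) ℂ)))) :=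
  ⟨AlgEquiv.ofAlgHom (PhiBar n hn τ) (PsiBar n hn τ) (comp1 n hn τ) (comp2 n hn τ)⟩

end Stmt17Aux

/-- Second family (2.5.3): at every point `τ`, the tangent algebra
`S/(J + (tᵢ − τᵢ))` is isomorphic to `ℂ[x₂,x₃]/(x₂², x₂x₃, x₃^{n−1})`. -/
theorem stmt_17 (n : ℕ) (hn : 3 ≤ n) (τ : Fin n → ℂ) :
    Nonempty
      ((MvPolynomial (Fin n ⊕ Fin n) ℂ ⧸
          (Jfam2 n hn + Ideal.span (Set.range (fun i : Fin n =>
            MvPolynomial.X (Sum.inl i) - MvPolynomial.C (τ i))))) ≃ₐ[ℂ]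
        (MvPolynomial (Fin 2) ℂ ⧸
          (Ideal.span {MvPolynomial.X 0 ^ 2,
            MvPolynomial.X 0 * MvPolynomial.X 1,
            MvPolynomial.X 1 ^ (n - 1)} : Ideal (MvPolynomial (Fin 2) ℂ)))) := by
  exact Stmt17Aux.main n hn τ
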